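/- Let x be an integrable real-valued function on (0,∞) and 0 < s < ∞. Suppose a : (0,∞) → [0,1] is measurable with ∫a dm = s and ∫ x₊ · a dm = ∫₀ˢ μ(t; x₊) dt, and suppose the decreasing rearrangement μ(x₊) is not constant on any left neighborhood of s. Then a = χ_{{x₊ > μ(s;x₊)}} almost everywhere. -/

import Mathlib

open MeasureTheory Set

/-- Decreasing rearrangement of `|f|` with respect to Lebesgue measure on `(0,∞)`. -/
noncomputable def rearr (f : ℝ → ℝ) (t : ℝ) : ℝ :=
  sInf {s : ℝ | 0 ≤ s ∧ (volume.restrict (Set.Ioi (0:ℝ))) {x | s < |f x|} ≤ ENNReal.ofReal t}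

/-- Positive part of a function. -/
noncomputable def posPart' (f : ℝ → ℝ) : ℝ → ℝ := fun t => max (f t) 0

/-- Negative part of a function. -/
noncomputable def negPart' (f : ℝ → ℝ) : ℝ → ℝ := fun t => max (-f t) 0

/-- Hardy–Littlewood–Pólya submajorization on `(0,∞)`. -/
def SubMaj (f g : ℝ → ℝ) : Prop :=
  ∀ t : ℝ, 0 ≤ t →
    (∫ s in Set.Ioc (0:ℝ) t, rearr f s) ≤ ∫ s in Set.Ioc (0:ℝ) t, rearr g s

/-- Hardy–Littlewood–Pólya majorization on `(0,∞)`: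
`f₊ ≺≺ g₊`, `f₋ ≺≺ g₋` and `∫ f = ∫ g`. -/
def Maj (f g : ℝ → ℝ) : Prop :=
  SubMaj (posPart' f) (posPart' g) ∧ SubMaj (negPart' f) (negPart' g) ∧
    (∫ t in Set.Ioi (0:ℝ), f t) = ∫ t in Set.Ioi (0:ℝ), g t

/-!
Write `β = μ(s; x₊)`. By the layer-cake formula `(x₊ - β)₊` and `(μ(x₊) - β)₊` have the same
integral, and since `μ(x₊)` is decreasing the latter is `∫₀ˢ μ(x₊) - sβ`; optimality of `a` turns
this into `∫ (x₊ - β)₊ = ∫ (x₊ - β) a`. As `(x₊ - β) a ≤ (x₊ - β)₊` pointwise, `a = 1` a.e. on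
`E = {x₊ > β}`. Because `μ(x₊)` is not constant to the left of `s`, `|E| ≥ s = ∫ a`, so `a`
vanishes a.e. off `E`.
-/

open scoped ENNReal

local notation "ν" => volume.restrict (Ioi (0:ℝ))

/-- `rearr f t` is, by definition, `sInf {r | 0 ≤ r ∧ distribFun f r ≤ ENNReal.ofReal t}`;
the proofs below use this unfolding silently. -/
noncomputable def distribFun (f : ℝ → ℝ) (r : ℝ) : ℝ≥0∞ := ν {t | r < |f t|}

lemma AntitoneOn.exists_lt_of_forall_exists_ne {φ : ℝ → ℝ} {s : ℝ} (hφ : AntitoneOn φ (Ioi 0))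
    (hs : 0 < s)
    (hnc : ∀ ε : ℝ, 0 < ε → ∃ t₁ ∈ Ioc (s - ε) s, ∃ t₂ ∈ Ioc (s - ε) s, φ t₁ ≠ φ t₂)
    {ε : ℝ} (hε : 0 < ε) : ∃ t ∈ Ioc (s - ε) s, φ s < φ t := by
  obtain ⟨t₁, ht₁, t₂, ht₂, hne⟩ := hnc (min ε s) (lt_min hε hs)
  have hsub : Ioc (s - min ε s) s ⊆ Ioc (s - ε) s :=
    Ioc_subset_Ioc_left (by linarith [min_le_left ε s])
  have hle : ∀ t ∈ Ioc (s - min ε s) s, φ s ≤ φ t := fun t ht =>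
    hφ (show 0 < t by linarith [ht.1, min_le_right ε s]) hs ht.2
  rcases (hle t₁ ht₁).lt_or_eq with h₁ | h₁
  · exact ⟨t₁, hsub ht₁, h₁⟩
  · exact ⟨t₂, hsub ht₂, (hle t₂ ht₂).lt_of_ne fun h₂ => hne (h₁.symm.trans h₂)⟩

section Rearrangement

variable {f : ℝ → ℝ}

lemma distribFun_antitone (f : ℝ → ℝ) : Antitone (distribFun f) :=
  fun _ _ hrr' => measure_mono fun _ ht => lt_of_le_of_lt hrr' ht

lemma distribFun_eq_iSup (f : ℝ → ℝ) (r : ℝ) :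
    distribFun f r = ⨆ n : ℕ, distribFun f (r + 1 / (n + 1)) := by
  have hmono : Monotone fun n : ℕ => {t | r + 1 / (n + 1) < |f t|} := by
    intro m n hmn t (ht : r + 1 / (m + 1) < |f t|)
    have : (1:ℝ) / (n + 1) ≤ 1 / (m + 1) := by gcongr
    exact (show r + 1 / (n + 1) < |f t| by linarith)
  have hunion : {t | r < |f t|} = ⋃ n : ℕ, {t | r + 1 / (n + 1) < |f t|} := by
    ext t
    simp only [mem_ofPred_eq, mem_iUnion]
    refine ⟨fun h => ?_, fun ⟨n, hn⟩ => ?_⟩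
    · obtain ⟨n, hn⟩ := exists_nat_one_div_lt (sub_pos.mpr h)
      exact ⟨n, by linarith⟩
    · linarith [show (0:ℝ) < 1 / (n + 1) by positivity]
  rw [distribFun, hunion, hmono.directed_le.measure_iUnion]
  rfl

lemma exists_distribFun_le (hf : Integrable f ν) {t : ℝ} (ht : 0 < t) :
    ∃ r, 0 ≤ r ∧ distribFun f r ≤ ENNReal.ofReal t := by
  set I := ∫⁻ y, ENNReal.ofReal |f y| ∂ν
  have hI : I ≠ ∞ := hf.abs.lintegral_lt_top.ne
  set r := (I.toReal + 1) / t
  have hr : 0 < r := by positivity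
  refine ⟨r, hr.le, ?_⟩
  have markov : ENNReal.ofReal r * distribFun f r ≤ I :=
    calc ENNReal.ofReal r * distribFun f r
        ≤ ENNReal.ofReal r * ν {y | ENNReal.ofReal r ≤ ENNReal.ofReal |f y|} := by
          gcongr
          exact measure_mono fun y (hy : r < |f y|) => ENNReal.ofReal_le_ofReal hy.le
      _ ≤ I := mul_meas_ge_le_lintegral₀ hf.1.aemeasurable.abs.ennreal_ofReal _
  have hIr : I < ENNReal.ofReal r * ENNReal.ofReal t := by
    rw [← ENNReal.ofReal_mul hr.le, div_mul_cancel₀ _ ht.ne']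
    nth_rw 1 [← ENNReal.ofReal_toReal hI]
    exact ENNReal.ofReal_lt_ofReal_iff'.mpr ⟨by linarith, by positivity⟩
  exact ((ENNReal.mul_lt_mul_iff_right (by simpa using hr) ENNReal.ofReal_ne_top).mp
    (markov.trans_lt hIr)).le

lemma rearr_nonneg (f : ℝ → ℝ) (t : ℝ) : 0 ≤ rearr f t :=
  Real.sInf_nonneg fun _ hr => hr.1

lemma rearr_antitoneOn (hf : Integrable f ν) : AntitoneOn (rearr f) (Ioi 0) := by
  intro t ht t' _ htt'
  obtain ⟨r, hr⟩ := exists_distribFun_le hf ht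
  exact csInf_le_csInf ⟨0, fun _ hr => hr.1⟩ ⟨r, hr⟩
    fun r hr => ⟨hr.1, hr.2.trans (ENNReal.ofReal_le_ofReal htt')⟩

lemma distribFun_rearr_le (hf : Integrable f ν) {t : ℝ} (ht : 0 < t) :
    distribFun f (rearr f t) ≤ ENNReal.ofReal t := by
  rw [distribFun_eq_iSup]
  refine iSup_le fun n => ?_
  obtain ⟨r, hr, hlt⟩ := exists_lt_of_csInf_lt (exists_distribFun_le hf ht)
    (lt_add_of_pos_right (rearr f t) (show (0:ℝ) < 1 / (n + 1) by positivity))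
  exact (distribFun_antitone f hlt.le).trans hr.2

lemma lt_rearr_iff (hf : Integrable f ν) {u t : ℝ} (hu : 0 ≤ u) (ht : 0 < t) :
    u < rearr f t ↔ ENNReal.ofReal t < distribFun f u := by
  refine ⟨fun h => ?_, fun h => ?_⟩
  · by_contra! hc
    exact h.not_ge (csInf_le ⟨0, fun _ hr => hr.1⟩ ⟨hu, hc⟩)
  · by_contra! hc
    exact ((distribFun_antitone f hc).trans (distribFun_rearr_le hf ht)).not_gt h

lemma distribFun_rearr (hf : Integrable f ν) {u : ℝ} (hu : 0 ≤ u) :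
    distribFun (rearr f) u = distribFun f u := by
  have hlevel : distribFun (rearr f) u = volume ({t | u < rearr f t} ∩ Ioi 0) := by
    simp only [distribFun, abs_of_nonneg (rearr_nonneg f _)]
    exact Measure.restrict_apply' measurableSet_Ioi
  have hlt : ∀ t ∈ Ioi (0:ℝ), u < rearr f t ↔ ENNReal.ofReal t < distribFun f u :=
    fun t ht => lt_rearr_iff hf hu ht
  rw [hlevel]
  by_cases hfin : distribFun f u = ∞
  · have : {t | u < rearr f t} ∩ Ioi 0 = Ioi 0 := inter_eq_right.mpr fun t ht =>
      (hlt t ht).mpr (hfin ▸ ENNReal.ofReal_lt_top)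
    rw [this, Real.volume_Ioi, hfin]
  · have : {t | u < rearr f t} ∩ Ioi 0 = Ioo 0 (distribFun f u).toReal := by
      ext t
      simp only [mem_inter_iff, mem_ofPred_eq, mem_Ioi, mem_Ioo]
      exact ⟨fun ⟨h, ht⟩ =>
          ⟨ht, (ENNReal.ofReal_lt_iff_lt_toReal ht.le hfin).mp ((hlt t ht).mp h)⟩,
        fun ⟨ht, h⟩ =>
          ⟨(hlt t ht).mpr ((ENNReal.ofReal_lt_iff_lt_toReal ht.le hfin).mpr h), ht⟩⟩
    rw [this, Real.volume_Ioo, sub_zero, ENNReal.ofReal_toReal hfin]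

lemma lintegral_ofReal_abs_sub (g : ℝ → ℝ) (hg : AEMeasurable g ν) (β : ℝ) :
    ∫⁻ t, ENNReal.ofReal (|g t| - β) ∂ν = ∫⁻ u in Ioi 0, distribFun g (β + u) := by
  have hmax : ∀ t, ENNReal.ofReal (|g t| - β) = ENNReal.ofReal (max (|g t| - β) 0) := by simp
  simp_rw [hmax]
  rw [lintegral_eq_lintegral_meas_lt (f := fun t => max (|g t| - β) 0) ν
    (ae_of_all _ fun _ => le_max_right _ _) (by fun_prop)]
  refine setLIntegral_congr_fun measurableSet_Ioi fun u (hu : 0 < u) => ?_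
  congr 1
  ext t
  simp only [mem_ofPred_eq, lt_max_iff, hu.not_gt, or_false]
  constructor <;> intro h <;> linarith

lemma aemeasurable_rearr (hf : Integrable f ν) : AEMeasurable (rearr f) ν :=
  aemeasurable_restrict_of_antitoneOn measurableSet_Ioi (rearr_antitoneOn hf)

lemma lintegral_rearr_sub (hf : Integrable f ν) {β : ℝ} (hβ : 0 ≤ β) :
    ∫⁻ t, ENNReal.ofReal (rearr f t - β) ∂ν = ∫⁻ t, ENNReal.ofReal (|f t| - β) ∂ν := by
  have h := lintegral_ofReal_abs_sub (rearr f) (aemeasurable_rearr hf) β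
  simp only [abs_of_nonneg (rearr_nonneg f _)] at h
  rw [h, lintegral_ofReal_abs_sub f hf.1.aemeasurable β]
  exact setLIntegral_congr_fun measurableSet_Ioi fun u (hu : 0 < u) =>
    distribFun_rearr hf (by linarith)

lemma integrable_rearr (hf : Integrable f ν) : Integrable (rearr f) ν := by
  refine ⟨(aemeasurable_rearr hf).aestronglyMeasurable, ?_⟩
  rw [hasFiniteIntegral_iff_ofReal (ae_of_all _ (rearr_nonneg f))]
  have h := lintegral_rearr_sub hf le_rfl
  simp only [sub_zero] at h
  exact h.trans_lt hf.abs.lintegral_lt_top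

lemma integral_max_sub_of_antitoneOn {φ : ℝ → ℝ} {s : ℝ} (hφ : AntitoneOn φ (Ioi 0))
    (hs : 0 < s) (hint : IntegrableOn φ (Ioc 0 s)) :
    ∫ t, max (φ t - φ s) 0 ∂ν = (∫ t in Ioc 0 s, φ t) - s * φ s := by
  have hind : EqOn (fun t => max (φ t - φ s) 0) ((Ioc 0 s).indicator fun t => φ t - φ s)
      (Ioi 0) := by
    intro t (ht : 0 < t)
    dsimp only
    by_cases hts : t ≤ s
    · rw [indicator_of_mem (show t ∈ Ioc 0 s from ⟨ht, hts⟩),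
        max_eq_left (sub_nonneg.2 (hφ ht hs hts))]
    · rw [indicator_of_notMem fun h => hts h.2,
        max_eq_right (sub_nonpos.2 (hφ hs ht (le_of_not_ge hts)))]
  rw [setIntegral_congr_fun measurableSet_Ioi hind, integral_indicator measurableSet_Ioc,
    Measure.restrict_restrict measurableSet_Ioc, inter_eq_left.mpr Ioc_subset_Ioi_self,
    integral_sub hint (integrableOn_const measure_Ioc_lt_top.ne), setIntegral_const,
    Real.volume_real_Ioc_of_le hs.le, smul_eq_mul, sub_zero]

lemma integral_max_abs_sub_rearr (hf : Integrable f ν) {s : ℝ} (hs : 0 < s) :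
    ∫ t, max (|f t| - rearr f s) 0 ∂ν = (∫ t in Ioc 0 s, rearr f t) - s * rearr f s := by
  rw [← integral_max_sub_of_antitoneOn (rearr_antitoneOn hf) hs
      (IntegrableOn.mono_set (integrable_rearr hf) Ioc_subset_Ioi_self),
    integral_eq_lintegral_of_nonneg_ae (f := fun t => max (|f t| - rearr f s) 0)
      (ae_of_all _ fun _ => le_max_right _ _) (by fun_prop),
    integral_eq_lintegral_of_nonneg_ae (f := fun t => max (rearr f t - rearr f s) 0)
      (ae_of_all _ fun _ => le_max_right _ _) (by have := aemeasurable_rearr hf; fun_prop)]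
  simp only [ENNReal.ofReal_max, ENNReal.ofReal_zero, zero_le, max_eq_left]
  rw [lintegral_rearr_sub hf (rearr_nonneg f s)]

lemma ofReal_le_distribFun_rearr (hf : Integrable f ν) {s : ℝ}
    (hstrict : ∀ ε : ℝ, 0 < ε → ∃ t ∈ Ioc (s - ε) s, rearr f s < rearr f t) :
    ENNReal.ofReal s ≤ distribFun f (rearr f s) := by
  by_contra! hlt
  obtain ⟨r, hr, hdr, hrs⟩ := ENNReal.lt_iff_exists_real_btwn.mp hlt
  have hrs : r < s := (ENNReal.ofReal_lt_ofReal_iff'.mp hrs).1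
  obtain ⟨t, ⟨hrt, -⟩, hst⟩ := hstrict (s - r) (by linarith)
  have hrt : r < t := by linarith
  have := (lt_rearr_iff hf (rearr_nonneg f s) (hr.trans_lt hrt)).mp hst
  exact (this.trans hdr).not_ge (ENNReal.ofReal_le_ofReal hrt.le)

end Rearrangement

section Weights

variable {α : Type*} [MeasurableSpace α] {μ : Measure α} {a : α → ℝ}

lemma ae_eq_one_of_integral_max_le_integral_mul {h : α → ℝ} (ha : ∀ t, a t ∈ Icc (0:ℝ) 1)
    (hh : Integrable (fun t => max (h t) 0) μ) (hha : Integrable (fun t => h t * a t) μ)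
    (hle : ∫ t, max (h t) 0 ∂μ ≤ ∫ t, h t * a t ∂μ) :
    ∀ᵐ t ∂μ, 0 < h t → a t = 1 := by
  have hpt : ∀ t, h t * a t ≤ max (h t) 0 := fun t => by
    rcases le_or_gt (h t) 0 with h0 | h0
    · exact (mul_nonpos_of_nonpos_of_nonneg h0 (ha t).1).trans (le_max_right _ _)
    · exact (mul_le_of_le_one_right h0.le (ha t).2).trans (le_max_left _ _)
  have heq := (integral_eq_iff_of_ae_le hha hh (ae_of_all _ hpt)).mp
    (le_antisymm (integral_mono hha hh hpt) hle)
  filter_upwards [heq] with t ht hpos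
  rw [max_eq_left hpos.le] at ht
  exact mul_left_cancel₀ hpos.ne' (ht.trans (mul_one _).symm)

lemma ae_eq_indicator_one_of_ae_eq_one {E : Set α} (hE : NullMeasurableSet E μ)
    (ha0 : 0 ≤ᵐ[μ] a) (hai : Integrable a μ) (ha1 : ∀ᵐ t ∂μ, t ∈ E → a t = 1)
    (hle : ENNReal.ofReal (∫ t, a t ∂μ) ≤ μ E) :
    a =ᵐ[μ] E.indicator 1 := by
  have haE : a =ᵐ[μ.restrict E] 1 := (ae_restrict_iff'₀ hE).mpr ha1
  have hfin : μ E ≠ ∞ := by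
    have h := hai.restrict (s := E) |>.lintegral_lt_top
    rw [lintegral_congr_ae (g := fun _ => 1) (haE.mono fun t ht => by simp [ht]),
      setLIntegral_one] at h
    exact h.ne
  have hcompl : ∫ t in Eᶜ, a t ∂μ = 0 := by
    have hsplit := integral_add_compl₀ hE hai
    rw [integral_congr_ae haE] at hsplit
    simp only [Pi.one_apply, setIntegral_const, smul_eq_mul, mul_one, measureReal_def] at hsplit
    have := (ENNReal.ofReal_le_iff_le_toReal hfin).mp hle
    exact le_antisymm (by linarith) (integral_nonneg_of_ae (ae_restrict_of_ae ha0))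
  have ha0E := (ae_restrict_iff'₀ hE.compl).mp
    ((integral_eq_zero_iff_of_nonneg_ae (ae_restrict_of_ae ha0) hai.restrict).mp hcompl)
  filter_upwards [ha1, ha0E] with t h1 h0
  by_cases ht : t ∈ E
  · rw [indicator_of_mem ht, h1 ht, Pi.one_apply]
  · rw [indicator_of_notMem ht, h0 ht, Pi.zero_apply]

end Weights

lemma ae_eq_one_of_integral_mul_eq_integral_rearr {f a : ℝ → ℝ} (hf : Integrable f ν) {s : ℝ}
    (hs : 0 < s) (ha : ∀ t, a t ∈ Icc (0:ℝ) 1) (hai : Integrable a ν) (haint : ∫ t, a t ∂ν = s)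
    (hopt : ∫ t, |f t| * a t ∂ν = ∫ t in Ioc 0 s, rearr f t) :
    ∀ᵐ t ∂ν, rearr f s < |f t| → a t = 1 := by
  set β := rearr f s
  have hfa : Integrable (fun t => |f t| * a t) ν :=
    hf.abs.mul_bdd hai.1 (ae_of_all _ fun t => by simpa [abs_of_nonneg (ha t).1] using (ha t).2)
  have hh : Integrable (fun t => max (|f t| - β) 0) ν :=
    hf.abs.mono' (by fun_prop) (ae_of_all _ fun t => by
      rw [Real.norm_of_nonneg (le_max_right _ _)]
      exact max_le (by linarith [rearr_nonneg f s]) (abs_nonneg _))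
  have hha : Integrable (fun t => (|f t| - β) * a t) ν :=
    (hfa.sub (hai.const_mul β)).congr (ae_of_all _ fun t => by simp only [Pi.sub_apply]; ring)
  have hle : ∫ t, max (|f t| - β) 0 ∂ν ≤ ∫ t, (|f t| - β) * a t ∂ν := le_of_eq <| calc
    ∫ t, max (|f t| - β) 0 ∂ν = (∫ t in Ioc 0 s, rearr f t) - s * β :=
        integral_max_abs_sub_rearr hf hs
    _ = (∫ t, |f t| * a t ∂ν) - β * ∫ t, a t ∂ν := by rw [hopt, haint]; ring
    _ = ∫ t, (|f t| - β) * a t ∂ν := by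
        rw [← integral_const_mul, ← integral_sub hfa (hai.const_mul β)]
        simp only [sub_mul]
  exact (ae_eq_one_of_integral_max_le_integral_mul ha hh hha hle).mono
    fun t ht hlt => ht (sub_pos.mpr hlt)

theorem stmt14_general (x : ℝ → ℝ) (hx : IntegrableOn x (Set.Ioi 0)) (s : ℝ) (hs : 0 < s)
    (a : ℝ → ℝ) (ha01 : ∀ t, a t ∈ Set.Icc (0:ℝ) 1)
    (haint : (∫ t in Set.Ioi (0:ℝ), a t) = s)
    (hopt : (∫ t in Set.Ioi (0:ℝ), max (x t) 0 * a t) =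
      ∫ t in Set.Ioc (0:ℝ) s, rearr (posPart' x) t)
    (hnc : ∀ ε : ℝ, 0 < ε → ∃ t₁ ∈ Set.Ioc (s - ε) s, ∃ t₂ ∈ Set.Ioc (s - ε) s,
      rearr (posPart' x) t₁ ≠ rearr (posPart' x) t₂) :
    ∀ᵐ t ∂(volume.restrict (Set.Ioi (0:ℝ))),
      a t = if rearr (posPart' x) s < max (x t) 0 then 1 else 0 := by
  set f := posPart' x
  have hf : Integrable f ν := hx.pos_part
  have habs : ∀ t, |f t| = max (x t) 0 := fun t => abs_of_nonneg (le_max_right _ _)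
  have hai : Integrable a ν := Integrable.of_integral_ne_zero (by rw [haint]; exact hs.ne')
  have hone : ∀ᵐ t ∂ν, rearr f s < max (x t) 0 → a t = 1 := by
    simpa only [habs] using ae_eq_one_of_integral_mul_eq_integral_rearr hf hs ha01 hai haint
      (by simpa only [habs] using hopt)
  have hlevel : ENNReal.ofReal s ≤ ν {t | rearr f s < max (x t) 0} := by
    simpa only [distribFun, habs] using ofReal_le_distribFun_rearr hf
      fun ε hε => (rearr_antitoneOn hf).exists_lt_of_forall_exists_ne hs hnc hε
  have hxm : AEMeasurable x ν := hx.1.aemeasurable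
  filter_upwards [ae_eq_indicator_one_of_ae_eq_one (E := {t | rearr f s < max (x t) 0})
    (nullMeasurableSet_lt aemeasurable_const (by fun_prop)) (ae_of_all _ fun t => (ha01 t).1)
    hai hone (haint ▸ hlevel)] with t ht
  simp only [ht, indicator_apply, mem_ofPred_eq, Pi.one_apply]

/-- If a weight `a` with `0 ≤ a ≤ 1`, `∫ a = s` attains
`∫ x₊·a = ∫₀ˢ μ(t;x₊) dt` and `μ(x₊)` is not constant on any left neighborhood of `s`,
then `a` is (a.e.) the indicator of the super-level set `{x₊ > μ(s;x₊)}`. -/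
theorem stmt14 (x : ℝ → ℝ) (hx : IntegrableOn x (Set.Ioi 0)) (s : ℝ) (hs : 0 < s)
    (a : ℝ → ℝ) (ha : Measurable a) (ha01 : ∀ t, a t ∈ Set.Icc (0:ℝ) 1)
    (haint : (∫ t in Set.Ioi (0:ℝ), a t) = s)
    (hopt : (∫ t in Set.Ioi (0:ℝ), max (x t) 0 * a t) =
      ∫ t in Set.Ioc (0:ℝ) s, rearr (posPart' x) t)
    (hnc : ∀ ε : ℝ, 0 < ε → ∃ t₁ ∈ Set.Ioc (s - ε) s, ∃ t₂ ∈ Set.Ioc (s - ε) s,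
      rearr (posPart' x) t₁ ≠ rearr (posPart' x) t₂) :
    ∀ᵐ t ∂(volume.restrict (Set.Ioi (0:ℝ))),
      a t = if rearr (posPart' x) s < max (x t) 0 then 1 else 0 :=
  stmt14_general x hx s hs a ha01 haint hopt hnc
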